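/- arXiv:math/0603461 — 2 statements merged into one kernel-verified Lean document; each statement's English description precedes it below -/
import Mathlib

section
/- For symmetric convex bodies K, T in ℝⁿ and any integer k ≥ 3n, the entropy numbers satisfy e_k(K,T) ≤ 2·e_n(K,T)·exp(−c·k/n), where c > 0 is a universal constant. -/
open scoped Pointwise
open Set

/-- Euclidean space -/
abbrev E (n : ℕ) := EuclideanSpace ℝ (Fin n)

/-- symmetric convex body -/
def IsSymCB {n : ℕ} (K : Set (E n)) : Prop :=
  Convex ℝ K ∧ IsCompact K ∧ (interior K).Nonempty ∧ K = -K

/-- covering number: minimal number of translates of `T` needed to cover `K` -/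
noncomputable def covN {n : ℕ} (K T : Set (E n)) : ℕ :=
  sInf {N : ℕ | ∃ s : Finset (E n), s.card ≤ N ∧ K ⊆ ⋃ x ∈ s, x +ᵥ T}

/-- covering number with centers required to lie in `K` -/
noncomputable def covN' {n : ℕ} (K T : Set (E n)) : ℕ :=
  sInf {N : ℕ | ∃ s : Finset (E n), s.card ≤ N ∧ ↑s ⊆ K ∧ K ⊆ ⋃ x ∈ s, x +ᵥ T}

/-- entropy numbers -/
noncomputable def ek {n : ℕ} (k : ℝ) (K T : Set (E n)) : ℝ :=
  sInf {ε : ℝ | 0 < ε ∧ (covN K (ε • T) : ℝ) ≤ (2 : ℝ) ^ k}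

/-- polar body -/
def polar {n : ℕ} (K : Set (E n)) : Set (E n) :=
  {x | ∀ y ∈ K, (inner ℝ x y : ℝ) ≤ 1}

/-- Talagrand's γ_p functional of `K` w.r.t. the gauge of `T` -/
noncomputable def gammaP {n : ℕ} (p : ℝ) (K T : Set (E n)) : ℝ :=
  sInf {r : ℝ | ∃ A : ℕ → Finset (E n),
    (∀ j, ↑(A j) ⊆ K ∧ (A j).card ≤ 2 ^ 2 ^ j) ∧
    r = ⨆ x ∈ K, ∑' j : ℕ, (2 : ℝ) ^ ((j : ℝ) / p) * ⨅ y ∈ A j, gauge T (x - y)}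

/-!
Cover `K` by `2 ^ n` translates of `ε • T` and each of these by translates of `(δ * ε) • T`.
A maximal subset of `T` whose differences avoid `δ • T` is such a cover of `T`, and the disjoint
translates of `(δ / 2) • T` around its points lie in `(1 + δ / 2) • T`, so comparing volumes gives
at most `(1 + 2 / δ) ^ n` points. With `δ = 2 ^ (3 - k / n)` the two covers together use at most
`2 ^ k` translates, and `δ ≤ 2 * exp (-(log 2 / 3) * k / n)` as soon as `k ≥ 3 n`.
-/

open MeasureTheory Topology

section Covering

variable {G : Type*} [AddCommGroup G]

theorem subset_biUnion_vadd_add [DecidableEq G] {K B C : Set G} {s t : Finset G}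
    (hK : K ⊆ ⋃ x ∈ s, x +ᵥ B) (hB : B ⊆ ⋃ y ∈ t, y +ᵥ C) :
    K ⊆ ⋃ z ∈ s + t, z +ᵥ C := by
  intro w hw
  obtain ⟨x, hx, b, hb, rfl⟩ : ∃ x ∈ s, ∃ b ∈ B, x + b = w := by
    simpa [mem_vadd_set] using hK hw
  obtain ⟨y, hy, c, hc, rfl⟩ : ∃ y ∈ t, ∃ c ∈ C, y + c = b := by
    simpa [mem_vadd_set] using hB hb
  exact mem_iUnion₂.2 ⟨x + y, Finset.add_mem_add hx hy, c, hc, add_assoc x y c⟩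

theorem exists_finset_card_le_subset_biUnion_vadd {A S : Set G} (hS₀ : (0 : G) ∈ S)
    (hS : -S = S) {N : ℕ}
    (hN : ∀ s : Finset G, ↑s ⊆ A → (s : Set G).Pairwise (fun x y => x - y ∉ S) → s.card ≤ N) :
    ∃ s : Finset G, s.card ≤ N ∧ A ⊆ ⋃ x ∈ s, x +ᵥ S := by
  classical
  -- otherwise every separated subset of `A` can be enlarged by a point it does not cover
  by_contra! hcov
  have hsep : ∀ m : ℕ, ∃ s : Finset G,
      ↑s ⊆ A ∧ (s : Set G).Pairwise (fun x y => x - y ∉ S) ∧ s.card = m := by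
    intro m
    induction m with
    | zero => exact ⟨∅, by simp, by simp, rfl⟩
    | succ m ih =>
      obtain ⟨s, hsA, hs, rfl⟩ := ih
      obtain ⟨z, hzA, hz⟩ := not_subset.1 (hcov s (hN s hsA hs))
      have hzs : ∀ x ∈ s, z - x ∉ S := fun x hx hzx =>
        hz (mem_iUnion₂.2 ⟨x, hx, z - x, hzx, by simp⟩)
      have hzs' : z ∉ s := fun h => hzs z h (by simpa using hS₀)
      refine ⟨insert z s, ?_, ?_, Finset.card_insert_of_notMem hzs'⟩
      · simpa [insert_subset_iff] using ⟨hzA, hsA⟩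
      · rw [Finset.coe_insert, pairwise_insert]
        refine ⟨hs, fun x hx _ => ⟨hzs x hx, fun hxz => hzs x hx ?_⟩⟩
        rw [← hS, ← neg_sub]
        exact neg_mem_neg.2 hxz
  obtain ⟨s, hsA, hs, hcard⟩ := hsep (N + 1)
  have := hN s hsA hs
  omega

theorem IsCompact.exists_finset_subset_biUnion_vadd [TopologicalSpace G] [IsTopologicalAddGroup G]
    {K S : Set G} (hK : IsCompact K) (hS : S ∈ 𝓝 0) :
    ∃ s : Finset G, K ⊆ ⋃ x ∈ s, x +ᵥ S := by
  obtain ⟨s, -, hs⟩ := hK.elim_nhds_subcover (fun x => x +ᵥ S)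
    fun x _ => by simpa using vadd_mem_nhds_vadd x hS
  exact ⟨s, hs⟩

end Covering

section Euclidean

variable {n : ℕ}

theorem IsSymCB.mem_nhds_zero {T : Set (E n)} (hT : IsSymCB T) : T ∈ 𝓝 0 := by
  obtain ⟨hconv, -, ⟨x, hx⟩, hsym⟩ := hT
  have hnx : -x ∈ interior T := by
    have h := (Homeomorph.neg (E n)).image_interior T
    simp only [Homeomorph.coe_neg, image_neg_eq_neg] at h
    rw [hsym, ← h]
    exact neg_mem_neg.2 hx
  have h0 := hconv.interior hx hnx (by norm_num : (0 : ℝ) ≤ 1 / 2) (by norm_num : (0 : ℝ) ≤ 1 / 2)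
    (by norm_num)
  exact mem_interior_iff_mem_nhds.1 (by simpa using h0)

theorem IsSymCB.smul {T : Set (E n)} (hT : IsSymCB T) {ε : ℝ} (hε : ε ≠ 0) : IsSymCB (ε • T) :=
  ⟨hT.1.smul ε, hT.2.1.smul ε, by rw [interior_smul₀ hε]; exact hT.2.2.1.smul_set,
    by rw [← smul_set_neg, ← hT.2.2.2]⟩

theorem covN_le_card {K T : Set (E n)} {s : Finset (E n)} (h : K ⊆ ⋃ x ∈ s, x +ᵥ T) :
    covN K T ≤ s.card :=
  Nat.sInf_le ⟨s, le_rfl, h⟩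

theorem exists_card_le_covN {K T : Set (E n)} (h : ∃ s : Finset (E n), K ⊆ ⋃ x ∈ s, x +ᵥ T) :
    ∃ s : Finset (E n), s.card ≤ covN K T ∧ K ⊆ ⋃ x ∈ s, x +ᵥ T :=
  let ⟨s, hs⟩ := h
  Nat.sInf_mem (s := {N | ∃ s : Finset (E n), s.card ≤ N ∧ K ⊆ ⋃ x ∈ s, x +ᵥ T})
    ⟨s.card, s, le_rfl, hs⟩

theorem covN_le_mul_covN {K B C : Set (E n)} (hK : ∃ s : Finset (E n), K ⊆ ⋃ x ∈ s, x +ᵥ B)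
    (hB : ∃ t : Finset (E n), B ⊆ ⋃ y ∈ t, y +ᵥ C) : covN K C ≤ covN K B * covN B C := by
  classical
  obtain ⟨s, hs, hKs⟩ := exists_card_le_covN hK
  obtain ⟨t, ht, hBt⟩ := exists_card_le_covN hB
  calc covN K C ≤ (s + t).card := covN_le_card (subset_biUnion_vadd_add hKs hBt)
    _ ≤ s.card * t.card := Finset.card_add_le
    _ ≤ covN K B * covN B C := Nat.mul_le_mul hs ht

theorem IsSymCB.half_smul_sub_mem {T : Set (E n)} (hT : IsSymCB T) {δ : ℝ} (hδ : 0 ≤ δ)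
    {a b : E n} (ha : a ∈ T) (hb : b ∈ T) : (δ / 2) • a - (δ / 2) • b ∈ δ • T := by
  have hδT := hT.1.add_smul (div_nonneg hδ zero_le_two) (div_nonneg hδ zero_le_two)
  rw [add_halves] at hδT
  rw [hδT, sub_eq_add_neg, ← smul_neg]
  refine add_mem_add (smul_mem_smul_set ha) (smul_mem_smul_set ?_)
  rw [hT.2.2.2]
  exact neg_mem_neg.2 hb

theorem IsSymCB.card_le_of_pairwise_sub_notMem {T : Set (E n)} (hT : IsSymCB T) {δ : ℝ}
    (hδ : 0 < δ) {s : Finset (E n)} (hsT : ↑s ⊆ T)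
    (hs : (s : Set (E n)).Pairwise fun x y => x - y ∉ δ • T) :
    (s.card : ℝ) ≤ (1 + 2 / δ) ^ n := by
  set r := δ / 2
  have hr : 0 < r := by positivity
  have hvol : ∀ (x : E n) {c : ℝ}, 0 ≤ c →
      volume (x +ᵥ c • T) = ENNReal.ofReal (c ^ n) * volume T := by
    intro x c hc
    rw [measure_vadd, Measure.addHaar_smul, finrank_euclideanSpace_fin,
      abs_of_nonneg (pow_nonneg hc n)]
  have hdisj : (s : Set (E n)).PairwiseDisjoint fun x => x +ᵥ r • T := by
    intro x hx y hy hxy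
    refine disjoint_left.2 fun z hzx hzy => hs hx hy hxy ?_
    obtain ⟨_, ⟨a, ha, rfl⟩, rfl⟩ := hzx
    obtain ⟨_, ⟨b, hb, rfl⟩, hzy⟩ := hzy
    have hxy : x - y = r • b - r • a := by
      simp only [vadd_eq_add] at hzy
      rw [sub_eq_sub_iff_add_eq_add, ← hzy, add_comm]
    exact hxy ▸ hT.half_smul_sub_mem hδ.le hb ha
  have hsub : ⋃ x ∈ s, x +ᵥ r • T ⊆ (1 + r) • T := by
    rw [hT.1.add_smul zero_le_one hr.le, one_smul]
    refine iUnion₂_subset fun x hx => ?_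
    rintro _ ⟨_, ⟨a, ha, rfl⟩, rfl⟩
    exact add_mem_add (hsT hx) (smul_mem_smul_set ha)
  have hmeas : ∀ x ∈ s, MeasurableSet (x +ᵥ r • T) :=
    fun x _ => (hT.2.1.smul r).isClosed.measurableSet.const_vadd x
  have hT_pos : volume T ≠ 0 := (Measure.measure_pos_of_nonempty_interior _ hT.2.2.1).ne'
  have hT_fin : volume T ≠ ⊤ := hT.2.1.measure_lt_top.ne
  have hmass : ENNReal.ofReal (s.card * r ^ n) * volume T
      ≤ ENNReal.ofReal ((1 + r) ^ n) * volume T :=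
    calc ENNReal.ofReal (s.card * r ^ n) * volume T = volume (⋃ x ∈ s, x +ᵥ r • T) := by
          rw [measure_biUnion_finset hdisj hmeas, Finset.sum_congr rfl fun x _ => hvol x hr.le,
            Finset.sum_const, nsmul_eq_mul, ENNReal.ofReal_mul (by positivity),
            ENNReal.ofReal_natCast, mul_assoc]
      _ ≤ volume ((1 + r) • T) := measure_mono hsub
      _ = ENNReal.ofReal ((1 + r) ^ n) * volume T := by simpa using hvol 0 (by positivity)
  have hcard := (ENNReal.ofReal_le_ofReal_iff (by positivity)).1
    ((ENNReal.mul_le_mul_iff_left hT_pos hT_fin).1 hmass)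
  calc (s.card : ℝ) = s.card * r ^ n / r ^ n := by field_simp
    _ ≤ (1 + r) ^ n / r ^ n := by gcongr
    _ = (1 + 2 / δ) ^ n := by
      rw [← div_pow]
      congr 1
      field_simp
      ring

theorem IsSymCB.covN_smul_self_le {T : Set (E n)} (hT : IsSymCB T) {δ : ℝ} (hδ : 0 < δ) :
    (covN T (δ • T) : ℝ) ≤ (1 + 2 / δ) ^ n := by
  have hδT := hT.smul hδ.ne'
  obtain ⟨s, hs, hTs⟩ := exists_finset_card_le_subset_biUnion_vadd
    (mem_of_mem_nhds hδT.mem_nhds_zero) hδT.2.2.2.symm (N := ⌊(1 + 2 / δ) ^ n⌋₊)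
    fun s hsT hsep => Nat.le_floor (hT.card_le_of_pairwise_sub_notMem hδ hsT hsep)
  calc (covN T (δ • T) : ℝ) ≤ ⌊(1 + 2 / δ) ^ n⌋₊ := by exact_mod_cast (covN_le_card hTs).trans hs
    _ ≤ (1 + 2 / δ) ^ n := Nat.floor_le (by positivity)

theorem ek_nonneg (k : ℝ) (K T : Set (E n)) : 0 ≤ ek k K T :=
  Real.sInf_nonneg fun _ hε => hε.1.le

theorem ek_le_mul_ek {K T : Set (E n)} (hK : IsCompact K) (hT : IsSymCB T) {j k δ : ℝ}
    (hj : 0 ≤ j) (hδ : 0 < δ) (hδjk : (1 + 2 / δ) ^ n ≤ (2 : ℝ) ^ (k - j)) :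
    ek k K T ≤ δ * ek j K T := by
  have hj_ne : {ε : ℝ | 0 < ε ∧ (covN K (ε • T) : ℝ) ≤ 2 ^ j}.Nonempty := by
    obtain ⟨r, hr, hKr⟩ := (hK.isVonNBounded ℝ hT.mem_nhds_zero).exists_pos
    have hcov : covN K (r • T) ≤ 1 :=
      covN_le_card (s := {0}) (by simpa using hKr r (le_of_eq (Real.norm_of_nonneg hr.le).symm))
    exact ⟨r, hr, (Nat.cast_le_one.2 hcov).trans (Real.one_le_rpow one_le_two hj)⟩
  rw [ek, ek, ← smul_eq_mul, ← Real.sInf_smul_of_nonneg hδ.le]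
  refine csInf_le_csInf ⟨0, fun ε hε => hε.1.le⟩ hj_ne.smul_set ?_
  rintro _ ⟨ε, ⟨hε, hεj⟩, rfl⟩
  have hεT := hT.smul hε.ne'
  refine ⟨mul_pos hδ hε, ?_⟩
  calc (covN K ((δ * ε) • T) : ℝ) ≤ covN K (ε • T) * covN (ε • T) (δ • ε • T) := by
        rw [mul_smul]
        exact_mod_cast covN_le_mul_covN (hK.exists_finset_subset_biUnion_vadd hεT.mem_nhds_zero)
          (hεT.2.1.exists_finset_subset_biUnion_vadd (hεT.smul hδ.ne').mem_nhds_zero)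
    _ ≤ 2 ^ j * 2 ^ (k - j) :=
        mul_le_mul hεj ((hεT.covN_smul_self_le hδ).trans hδjk) (Nat.cast_nonneg _) (by positivity)
    _ = 2 ^ k := by rw [← Real.rpow_add two_pos, add_sub_cancel]

end Euclidean

theorem one_add_two_div_two_rpow_le {t : ℝ} (ht : 2 ≤ t) :
    1 + 2 / (2 : ℝ) ^ (3 - t) ≤ 2 ^ (t - 1) := by
  have h2 : 2 / (2 : ℝ) ^ (3 - t) = 2 ^ (t - 2) := by
    rw [div_eq_iff (by positivity), ← Real.rpow_add two_pos]
    norm_num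
  have h1 : (2 : ℝ) ^ (t - 1) = 2 ^ (t - 2) + 2 ^ (t - 2) := by
    rw [← two_mul, show t - 1 = 1 + (t - 2) by ring, Real.rpow_add two_pos, Real.rpow_one]
  rw [h2, h1]
  gcongr
  exact Real.one_le_rpow one_le_two (by linarith)

theorem two_rpow_three_sub_le {t : ℝ} (ht : 3 ≤ t) :
    (2 : ℝ) ^ (3 - t) ≤ 2 * Real.exp (-(Real.log 2 / 3) * t) := by
  rw [show 3 - t = 1 + (2 - t) by ring, Real.rpow_add two_pos, Real.rpow_one,
    Real.rpow_def_of_pos two_pos]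
  gcongr 2 * Real.exp ?_
  nlinarith [mul_nonneg (Real.log_pos one_lt_two).le (sub_nonneg.2 ht)]

theorem stmt4 : ∃ c : ℝ, 0 < c ∧ ∀ (n : ℕ), 1 ≤ n → ∀ (K T : Set (E n)),
    IsSymCB K → IsSymCB T → ∀ k : ℕ, 3 * n ≤ k →
    ek (k : ℝ) K T ≤ 2 * ek (n : ℝ) K T * Real.exp (-c * k / n) := by
  refine ⟨Real.log 2 / 3, by positivity, fun n hn K T hK hT k hk => ?_⟩
  have hn' : (0 : ℝ) < n := by exact_mod_cast hn
  set t : ℝ := k / n with ht_def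
  have ht : 3 ≤ t := by
    rw [le_div_iff₀ hn']
    exact_mod_cast hk
  have hvol : (1 + 2 / (2 : ℝ) ^ (3 - t)) ^ n ≤ (2 : ℝ) ^ ((k : ℝ) - n) :=
    calc (1 + 2 / (2 : ℝ) ^ (3 - t)) ^ n ≤ ((2 : ℝ) ^ (t - 1)) ^ n := by
          gcongr
          exact one_add_two_div_two_rpow_le (by linarith)
      _ = (2 : ℝ) ^ ((k : ℝ) - n) := by
          rw [← Real.rpow_mul_natCast zero_le_two, sub_mul, ht_def, div_mul_cancel₀ _ hn'.ne', one_mul]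
  calc ek (k : ℝ) K T ≤ (2 : ℝ) ^ (3 - t) * ek (n : ℝ) K T :=
        ek_le_mul_ek hK.2.1 hT n.cast_nonneg (by positivity) hvol
    _ ≤ 2 * Real.exp (-(Real.log 2 / 3) * t) * ek (n : ℝ) K T :=
        mul_le_mul_of_nonneg_right (two_rpow_three_sub_le ht) (ek_nonneg _ _ _)
    _ = 2 * ek (n : ℝ) K T * Real.exp (-(Real.log 2 / 3) * k / n) := by
        rw [ht_def, mul_div_assoc]
        ring
end

section
/- For ellipsoids K and T in ℝⁿ (images of the Euclidean unit ball under invertible linear maps), the covering numbers are exactly self-dual: N(K,T) = N(T°,K°). -/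
open scoped Pointwise
open Set

/-!
Writing `K = A B₂` and `T = B B₂`, applying `A⁻¹` to the left side and `B*` to the right side
(using `(S B₂)° = (S*)⁻¹ B₂`) reduces the claim to `N(B₂, M B₂) = N(B₂, M* B₂)` for
`M = A⁻¹ B`. By the polar decomposition `M = V C`, with `V` orthogonal and `C = √(M* M)`
symmetric, we get `M* = C V⁻¹`, so `M* B₂ = C B₂` while `M B₂ = V (C B₂)`; the two covering
numbers agree because `V` fixes `B₂`.
-/

open scoped MatrixOrder in
theorem LinearMap.IsPositive.exists_isSymmetric_comp_self_eq {𝕜 ι : Type*} [RCLike 𝕜] [Fintype ι]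
    [DecidableEq ι] {T : EuclideanSpace 𝕜 ι →ₗ[𝕜] EuclideanSpace 𝕜 ι} (hT : T.IsPositive) :
    ∃ C : EuclideanSpace 𝕜 ι →ₗ[𝕜] EuclideanSpace 𝕜 ι, C.IsSymmetric ∧ C ∘ₗ C = T := by
  set Q := Matrix.toEuclideanLin.symm T
  have hQ : 0 ≤ Q := by
    rw [Matrix.nonneg_iff_posSemidef, ← Matrix.isPositive_toEuclideanLin_iff]
    simpa [Q] using hT
  refine ⟨Matrix.toEuclideanLin (CFC.sqrt Q),
    Matrix.isSymmetric_toEuclideanLin_iff.mpr (CFC.sqrt_nonneg Q).isSelfAdjoint, ?_⟩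
  rw [← Matrix.toLpLin_mul_same, CFC.sqrt_mul_sqrt_self Q hQ]
  simp [Q]

section

variable {𝕜 E : Type*} [RCLike 𝕜] [NormedAddCommGroup E] [InnerProductSpace 𝕜 E]
  [FiniteDimensional 𝕜 E]

theorem LinearMap.IsSymmetric.norm_apply_eq_of_comp_self_eq {C : E →ₗ[𝕜] E} (hC : C.IsSymmetric)
    {M : E →ₗ[𝕜] E} (hCM : C ∘ₗ C = adjoint M ∘ₗ M) (x : E) : ‖C x‖ = ‖M x‖ := by
  have h : (‖C x‖ : 𝕜) ^ 2 = (‖M x‖ : 𝕜) ^ 2 := by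
    rw [← inner_self_eq_norm_sq_to_K, ← inner_self_eq_norm_sq_to_K, ← hC, ← LinearMap.comp_apply,
      hCM, LinearMap.comp_apply, LinearMap.adjoint_inner_left]
  exact_mod_cast (sq_eq_sq₀ (norm_nonneg _) (norm_nonneg _)).mp (by exact_mod_cast h)

end

theorem LinearEquiv.exists_linearIsometryEquiv_comp_isSymmetric {𝕜 ι : Type*} [RCLike 𝕜]
    [Fintype ι] [DecidableEq ι] (M : EuclideanSpace 𝕜 ι ≃ₗ[𝕜] EuclideanSpace 𝕜 ι) :
    ∃ (V : EuclideanSpace 𝕜 ι ≃ₗᵢ[𝕜] EuclideanSpace 𝕜 ι)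
      (C : EuclideanSpace 𝕜 ι →ₗ[𝕜] EuclideanSpace 𝕜 ι),
      C.IsSymmetric ∧ M.toLinearMap = V.toLinearMap ∘ₗ C := by
  -- `C = √(M* M)` has `‖C x‖ = ‖M x‖`, so `V = M C⁻¹` is an isometry.
  obtain ⟨C, hC, hCM⟩ :=
    (LinearMap.isPositive_adjoint_comp_self M.toLinearMap).exists_isSymmetric_comp_self_eq
  have hnorm := hC.norm_apply_eq_of_comp_self_eq hCM
  have hinj : Function.Injective C := by
    refine (injective_iff_map_eq_zero C).mpr fun x hx => M.map_eq_zero_iff.mp ?_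
    rw [← norm_eq_zero, ← LinearEquiv.coe_coe, ← hnorm, hx, norm_zero]
  set C' := LinearEquiv.ofInjectiveEndo C hinj
  refine ⟨⟨C'.symm.trans M, fun y => ?_⟩, C, hC, LinearMap.ext fun x => ?_⟩
  · calc ‖M (C'.symm y)‖ = ‖C' (C'.symm y)‖ := (hnorm _).symm
      _ = ‖y‖ := by rw [C'.apply_symm_apply]
  · change M x = M (C'.symm (C' x))
    rw [C'.symm_apply_apply]

namespace LinearEquiv

variable {𝕜 E F G : Type*} [RCLike 𝕜] [NormedAddCommGroup E] [InnerProductSpace 𝕜 E]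
  [FiniteDimensional 𝕜 E] [NormedAddCommGroup F] [InnerProductSpace 𝕜 F] [FiniteDimensional 𝕜 F]
  [NormedAddCommGroup G] [InnerProductSpace 𝕜 G] [FiniteDimensional 𝕜 G]

noncomputable def adjoint (S : E ≃ₗ[𝕜] F) : F ≃ₗ[𝕜] E :=
  .ofLinearMap (LinearMap.adjoint S.toLinearMap) (LinearMap.adjoint S.symm.toLinearMap)
    (by rw [← LinearMap.adjoint_comp, S.symm_comp, LinearMap.adjoint_id])
    (by rw [← LinearMap.adjoint_comp, S.comp_symm, LinearMap.adjoint_id])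

@[simp]
theorem coe_adjoint (S : E ≃ₗ[𝕜] F) : ⇑S.adjoint = LinearMap.adjoint S.toLinearMap :=
  rfl

@[simp]
theorem symm_adjoint (S : E ≃ₗ[𝕜] F) : S.adjoint.symm = S.symm.adjoint :=
  rfl

theorem adjoint_trans (S : E ≃ₗ[𝕜] F) (R : F ≃ₗ[𝕜] G) :
    (S.trans R).adjoint = R.adjoint.trans S.adjoint :=
  toLinearMap_injective (LinearMap.adjoint_comp R.toLinearMap S.toLinearMap)

end LinearEquiv

open Metric

section Covering

variable {n : ℕ}

theorem image_subset_biUnion_image_vadd (f : E n →ₗ[ℝ] E n) {K T : Set (E n)} {s : Finset (E n)}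
    (h : K ⊆ ⋃ x ∈ s, x +ᵥ T) : f '' K ⊆ ⋃ y ∈ s.image f, y +ᵥ f '' T := by
  rintro _ ⟨k, hk, rfl⟩
  obtain ⟨x, hx, t, ht, rfl⟩ : ∃ x ∈ s, ∃ t ∈ T, x + t = k := by simpa [mem_vadd_set] using h hk
  exact mem_biUnion (Finset.mem_image_of_mem f hx)
    ⟨f t, mem_image_of_mem f ht, (map_add f x t).symm⟩

theorem covN_image (S : E n ≃ₗ[ℝ] E n) (K T : Set (E n)) : covN (S '' K) (S '' T) = covN K T := by
  have hcover : ∀ (S : E n ≃ₗ[ℝ] E n) (K T : Set (E n)) (N : ℕ),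
      (∃ s : Finset (E n), s.card ≤ N ∧ K ⊆ ⋃ x ∈ s, x +ᵥ T) →
        ∃ s : Finset (E n), s.card ≤ N ∧ S '' K ⊆ ⋃ x ∈ s, x +ᵥ S '' T :=
    fun S K T N ⟨s, hs, hK⟩ =>
      ⟨s.image S, Finset.card_image_le.trans hs, image_subset_biUnion_image_vadd S.toLinearMap hK⟩
  unfold covN
  congr 1
  ext N
  refine ⟨fun h => ?_, hcover S K T N⟩
  simpa only [image_image, S.symm_apply_apply, image_id', mem_ofPred_eq] using hcover S.symm _ _ N h

theorem covN_image_image (P Q : E n ≃ₗ[ℝ] E n) (K T : Set (E n)) :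
    covN (P '' K) (Q '' T) = covN K ((Q.trans P.symm) '' T) := by
  rw [← covN_image P.symm, image_image, image_image]
  simp only [P.symm_apply_apply, image_id']
  rfl

end Covering

section Polar

variable {n : ℕ}

theorem polar_image (f : E n →ₗ[ℝ] E n) (K : Set (E n)) :
    polar (f '' K) = LinearMap.adjoint f ⁻¹' polar K := by
  ext x
  simp [polar, LinearMap.adjoint_inner_left]

theorem polar_closedBall : polar (closedBall (0 : E n) 1) = closedBall 0 1 := by
  ext x
  simp only [polar, mem_ofPred_eq, mem_closedBall_zero_iff]
  refine ⟨fun h => ?_, fun hx y hy => ?_⟩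
  · rcases eq_or_ne x 0 with rfl | hx
    · simp
    · have hx' : 0 < ‖x‖ := norm_pos_iff.mpr hx
      have := h (‖x‖⁻¹ • x) (by rw [norm_smul, norm_inv, norm_norm, inv_mul_cancel₀ hx'.ne'])
      rwa [real_inner_smul_right, real_inner_self_eq_norm_sq, sq, ← mul_assoc,
        inv_mul_cancel₀ hx'.ne', one_mul] at this
  · calc inner ℝ x y ≤ ‖x‖ * ‖y‖ := real_inner_le_norm x y
      _ ≤ 1 := mul_le_one₀ hx (norm_nonneg y) hy

theorem polar_image_closedBall (S : E n ≃ₗ[ℝ] E n) :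
    polar (S '' closedBall 0 1) = S.adjoint.symm '' closedBall 0 1 := by
  rw [S.adjoint.image_symm_eq_preimage, ← S.coe_coe, polar_image, polar_closedBall]
  rfl

end Polar

theorem covN_closedBall_image_adjoint {n : ℕ} (M : E n ≃ₗ[ℝ] E n) :
    covN (closedBall 0 1) (M.adjoint '' closedBall 0 1) =
      covN (closedBall 0 1) (M '' closedBall 0 1) := by
  obtain ⟨V, C, hC, hM⟩ := M.exists_linearIsometryEquiv_comp_isSymmetric
  have hM' : ⇑M.adjoint = C ∘ V.symm := by
    rw [M.coe_adjoint, hM, LinearMap.adjoint_comp, hC.adjoint_eq,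
      V.adjoint_toLinearMap_eq_symm]
    rfl
  have hball : V.symm '' closedBall (0 : E n) 1 = closedBall 0 1 := by
    rw [V.symm.image_closedBall, map_zero]
  rw [hM', image_comp, hball, ← covN_image V.toLinearEquiv, LinearIsometryEquiv.coe_toLinearEquiv,
    V.image_closedBall, map_zero, image_image, ← LinearEquiv.coe_coe, hM]
  rfl

theorem stmt19 {n : ℕ} (A B : E n ≃ₗ[ℝ] E n)
    (K T : Set (E n)) (hK : K = A '' Metric.closedBall 0 1)
    (hT : T = B '' Metric.closedBall 0 1) :
    covN K T = covN (polar T) (polar K) := by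
  subst hK hT
  rw [polar_image_closedBall, polar_image_closedBall, covN_image_image, covN_image_image,
    LinearEquiv.symm_symm, LinearEquiv.symm_adjoint, ← LinearEquiv.adjoint_trans,
    covN_closedBall_image_adjoint]
end
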